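/- arXiv:math/0701409 — 3 statements merged into one kernel-verified Lean document; each statement's English description precedes it below -/
import Mathlib

section
/- For integers n ≥ 2, d ≥ 4, 0 ≤ k ≤ ⌈(1/(n+1))·C(n+d,n)⌉, and integers u, ε with 0 ≤ ε < n satisfying n·u + ε = k·(n+1) − C(n+d−1, n), one has n·ε + u ≤ C(n+d−2, n−1). -/
/-!
Multiplying the claim by `n` and using `n u + ε = k (n + 1) - C(n+d-1, n)`, the ceiling bound
`(k - 1)(n + 1) < C(n+d, n)` and `ε ≤ n - 1`, one gets
`n (n ε + u) ≤ n³ - n² + 1 + C(n+d-1, n-1)`. By Pascal's rule and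
`(n - 1) C(n+d-2, n-1) = d C(n+d-2, n-2)`, this is at most `n C(n+d-2, n-1)` as soon as
`n³ + 1 ≤ (d - 1) C(n+d-2, n-2) + n²`. For `n ≥ 5` this follows from `C(n+d-2, n-2) ≥ C(n+2, 4)`;
for `n ≤ 4` it is explicit and fails only for `(n, d) ∈ {(2,4), (2,5), (3,4), (4,4)}`. In those
four cases `ε` is pinned down by the congruence modulo `n`, and the claim is a finite check.
-/

lemma Int.sub_one_mul_lt_of_le_ceil_div {K : Type*} [Field K] [LinearOrder K]
    [IsStrictOrderedRing K] [FloorRing K] {k : ℤ} {a q : K} (hq : 0 < q)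
    (hk : k ≤ ⌈a / q⌉) : ((k : K) - 1) * q < a :=
  (lt_div_iff₀ hq).1 (Int.le_ceil_iff.1 hk)

lemma Nat.add_four_choose_four_mul (m : ℕ) :
    (m + 4).choose 4 * 24 = (m + 4) * (m + 3) * (m + 2) * (m + 1) := by
  rw [mul_comm, show 24 = (4).factorial from rfl, ← Nat.descFactorial_eq_factorial_mul_choose]
  simp only [Nat.descFactorial, Nat.reduceSubDiff, Nat.add_one_sub_one, tsub_zero, mul_one]
  ring

lemma cube_add_one_le_mul_choose {n d : ℕ} (hn : 2 ≤ n) (hd : 4 ≤ d)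
    (hnd : 5 ≤ n ∨ 6 ≤ d ∨ (3 ≤ n ∧ 5 ≤ d)) :
    n ^ 3 + 1 ≤ (d - 1) * (n + d - 2).choose (n - 2) + n ^ 2 := by
  rcases lt_or_ge n 5 with hn5 | hn5
  · have hmono : (n + 3).choose (n - 2) ≤ (n + d - 2).choose (n - 2) :=
      Nat.choose_le_choose _ (by omega)
    interval_cases n
    · norm_num
      omega
    · rw [show Nat.choose (3 + 3) (3 - 2) = 6 from rfl] at hmono
      nlinarith [Nat.mul_le_mul (show 4 ≤ d - 1 by omega) hmono]
    · rw [show Nat.choose (4 + 3) (4 - 2) = 21 from rfl] at hmono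
      nlinarith [Nat.mul_le_mul (show 4 ≤ d - 1 by omega) hmono]
  · obtain ⟨m, rfl⟩ := Nat.exists_eq_add_of_le' hn
    have hmono : (m + 4).choose 4 ≤ (m + 2 + d - 2).choose (m + 2 - 2) := by
      rw [← Nat.choose_symm_add]
      exact Nat.choose_le_choose _ (by omega)
    have h4 := Nat.add_four_choose_four_mul m
    nlinarith [Nat.mul_le_mul (show 3 ≤ d - 1 by omega) hmono]

lemma cube_add_choose_le_mul_choose {n d : ℕ} (hn : 2 ≤ n) (hd : 4 ≤ d)
    (hnd : 5 ≤ n ∨ 6 ≤ d ∨ (3 ≤ n ∧ 5 ≤ d)) :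
    n ^ 3 + 1 + (n + d - 1).choose (n - 1) ≤ n * (n + d - 2).choose (n - 1) + n ^ 2 := by
  have hpascal : (n + d - 1).choose (n - 1) =
      (n + d - 2).choose (n - 2) + (n + d - 2).choose (n - 1) := by
    rw [Nat.choose_eq_choose_pred_add (by omega) (by omega)]
    rfl
  have habsorb : (n + d - 2).choose (n - 1) * (n - 1) = (n + d - 2).choose (n - 2) * d := by
    have := Nat.choose_succ_right_eq (n + d - 2) (n - 2)
    rwa [show n - 2 + 1 = n - 1 by omega, show n + d - 2 - (n - 2) = d by omega] at this
  have hkey := cube_add_one_le_mul_choose hn hd hnd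
  zify [show 1 ≤ n by omega, show 1 ≤ d by omega] at hpascal habsorb hkey ⊢
  linarith

theorem stmt_0_general (n d : ℕ) (k u ε : ℤ) (hn : 2 ≤ n) (hd : 4 ≤ d)
    (hk : k ≤ ⌈(((n + d).choose n : ℚ)) / ((n : ℚ) + 1)⌉)
    (hεn : ε < (n : ℤ))
    (h : (n : ℤ) * u + ε = k * ((n : ℤ) + 1) - ((n + d - 1).choose n : ℤ)) :
    (n : ℤ) * ε + u ≤ ((n + d - 2).choose (n - 1) : ℤ) := by
  have hceil : (k - 1) * ((n : ℤ) + 1) < ((n + d).choose n : ℤ) := by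
    exact_mod_cast Int.sub_one_mul_lt_of_le_ceil_div (by positivity) hk
  have hpascal : (n + d).choose n = (n + d - 1).choose (n - 1) + (n + d - 1).choose n :=
    Nat.choose_eq_choose_pred_add (by omega) (by omega)
  have hε : ((n : ℤ) ^ 2 - 1) * ε ≤ ((n : ℤ) ^ 2 - 1) * (n - 1) :=
    mul_le_mul_of_nonneg_left (by omega) (by nlinarith)
  have hbound : (n : ℤ) * (n * ε + u) + n ^ 2 ≤ n ^ 3 + 1 + ((n + d - 1).choose (n - 1) : ℤ) := by
    push_cast [hpascal] at hceil
    linarith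
  by_cases hnd : 5 ≤ n ∨ 6 ≤ d ∨ (3 ≤ n ∧ 5 ≤ d)
  · have hchoose : ((n ^ 3 + 1 + (n + d - 1).choose (n - 1) : ℕ) : ℤ) ≤
        ((n * (n + d - 2).choose (n - 1) + n ^ 2 : ℕ) : ℤ) :=
      Nat.cast_le.2 (cube_add_choose_le_mul_choose hn hd hnd)
    push_cast at hchoose
    exact le_of_mul_le_mul_left (by linarith) (by positivity : (0 : ℤ) < n)
  · obtain ⟨rfl, rfl⟩ | ⟨rfl, rfl⟩ | ⟨rfl, rfl⟩ | ⟨rfl, rfl⟩ :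
        (n = 2 ∧ d = 4) ∨ (n = 2 ∧ d = 5) ∨ (n = 3 ∧ d = 4) ∨ (n = 4 ∧ d = 4) := by
      omega
    all_goals
      norm_num [Nat.choose] at h hceil ⊢
      omega

/-- Lemma 6.3(i) of Brambilla–Ottaviani: the numerical lemma used in the
Alexander–Hirschowitz induction. -/
theorem stmt_0 (n d : ℕ) (k u ε : ℤ) (hn : 2 ≤ n) (hd : 4 ≤ d)
    (hk0 : 0 ≤ k) (hk : k ≤ ⌈(((n + d).choose n : ℚ)) / ((n : ℚ) + 1)⌉)
    (hε0 : 0 ≤ ε) (hεn : ε < (n : ℤ))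
    (h : (n : ℤ) * u + ε = k * ((n : ℤ) + 1) - ((n + d - 1).choose n : ℤ)) :
    (n : ℤ) * ε + u ≤ ((n + d - 2).choose (n - 1) : ℤ) :=
  stmt_0_general n d k u ε hn hd hk hεn h
end

section
/- For integers n ≥ 2, d ≥ 4, 0 ≤ k ≤ ⌈(1/(n+1))·C(n+d,n)⌉, and integers u, ε with 0 ≤ ε < n satisfying n·u + ε = k·(n+1) − C(n+d−1, n), one has C(n+d−2, n) ≤ (k − u − ε)·(n+1). -/
/-
Multiplying the goal by `n` and eliminating `u`, it becomes
`n * C(n+d-2,n) + (n+1) * k + (n+1)(n-1) * ε ≤ (n+1) * C(n+d-1,n)`.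
The ceiling gives `(n+1) * k ≤ C(n+d,n) + n`, and Pascal's rule turns
`(n+1) * C(n+d-1,n) - C(n+d,n) - n * C(n+d-2,n)` into `(d-1) * C(n+d-2,n-2)`, so with `ε ≤ n-1`
it suffices that `n^3 - n^2 + 1 ≤ (d-1) * C(n+d-2,n-2)`. This can fail only for `n ≤ 4, d ≤ 5`,
where the claim is checked directly in integer arithmetic.
-/

theorem Int.mul_succ_le_add_of_le_ceil_div {K : Type*} [Field K] [LinearOrder K]
    [IsStrictOrderedRing K] [FloorRing K] {k : ℤ} {N n : ℕ}
    (hk : k ≤ ⌈(N : K) / ((n : K) + 1)⌉) : k * (n + 1) ≤ N + n := by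
  rw [Int.le_ceil_iff, lt_div_iff₀ (by positivity)] at hk
  have : (k - 1) * (n + 1) < (N : ℤ) := by exact_mod_cast hk
  linarith

theorem le_sub_sub_mul_succ {n N A B k u ε : ℤ} (hn : 0 < n) (hk : k * (n + 1) ≤ N + n)
    (hε : ε ≤ n - 1) (h : n * u + ε = k * (n + 1) - A)
    (hA : n ^ 3 - n ^ 2 + 1 ≤ (n + 1) * A - N - n * B) :
    B ≤ (k - u - ε) * (n + 1) := by
  have hεn := mul_le_mul_of_nonneg_left hε (show 0 ≤ (n + 1) * (n - 1) by nlinarith)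
  refine le_of_mul_le_mul_left ?_ hn
  linear_combination (n + 1) * h + hk + hεn + hA

theorem add_three_mul_choose_sub_choose_sub (m d : ℕ) :
    ((m + 3) * (m + d + 1).choose (m + 2) - (m + d + 2).choose (m + 2)
      - (m + 2) * (m + d).choose (m + 2) : ℤ) = (d - 1) * (m + d).choose m := by
  have ratio : ((m + d).choose (m + 1) * (m + 1) : ℤ) = (m + d).choose m * d := by
    have := Nat.choose_succ_right_eq (m + d) m
    rw [Nat.add_sub_cancel_left] at this
    exact_mod_cast this
  rw [Nat.choose_succ_succ' (m + d + 1), Nat.choose_succ_succ' (m + d) (m + 1),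
    Nat.choose_succ_succ' (m + d) m]
  push_cast
  linear_combination ratio

theorem cube_sub_sq_add_one_le_mul_choose (m d : ℕ) (hd : 4 ≤ d) (hmd : 3 ≤ m ∨ 6 ≤ d) :
    ((m + 2) ^ 3 - (m + 2) ^ 2 + 1 : ℤ) ≤ (d - 1) * (m + d).choose m := by
  by_cases hm : 3 ≤ m
  · have hC : (m + 4).choose 4 ≤ (m + d).choose m := by
      rw [← Nat.choose_symm_add]; exact Nat.choose_le_choose m (by omega)
    have h24 : ((m + 4).choose 4 * 24 : ℤ) = (m + 4) * (m + 3) * (m + 2) * (m + 1) := by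
      have := Nat.descFactorial_eq_factorial_mul_choose (m + 4) 4
      simp only [Nat.descFactorial_succ, Nat.descFactorial_zero, Nat.factorial] at this
      push_cast [mul_comm] at this ⊢
      linarith
    calc ((m + 2) ^ 3 - (m + 2) ^ 2 + 1 : ℤ) ≤ 3 * (m + 4).choose 4 := by
          have : (3 : ℤ) ≤ m := by exact_mod_cast hm
          nlinarith
      _ ≤ (d - 1) * (m + d).choose m := by
          gcongr <;> omega
  · have hC : (m + 6).choose m ≤ (m + d).choose m := Nat.choose_le_choose m (by omega)
    calc ((m + 2) ^ 3 - (m + 2) ^ 2 + 1 : ℤ) ≤ 5 * (m + 6).choose m := by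
          interval_cases m <;> decide
      _ ≤ (d - 1) * (m + d).choose m := by
          gcongr <;> omega

theorem stmt_1_general (n d : ℕ) (k u ε : ℤ) (hn : 2 ≤ n) (hd : 4 ≤ d)
    (hk : k ≤ ⌈(((n + d).choose n : ℚ)) / ((n : ℚ) + 1)⌉)
    (hεn : ε < (n : ℤ))
    (h : (n : ℤ) * u + ε = k * ((n : ℤ) + 1) - ((n + d - 1).choose n : ℤ)) :
    ((n + d - 2).choose n : ℤ) ≤ (k - u - ε) * ((n : ℤ) + 1) := by
  obtain ⟨m, rfl⟩ : ∃ m, n = m + 2 := ⟨n - 2, by omega⟩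
  have hkN := Int.mul_succ_le_add_of_le_ceil_div hk
  rw [show m + 2 + d = m + d + 2 by omega] at hkN
  rw [show m + 2 + d - 1 = m + d + 1 by omega] at h
  rw [show m + 2 + d - 2 = m + d by omega]
  push_cast at hkN h hεn ⊢
  by_cases hsmall : m ≤ 2 ∧ d ≤ 5
  · obtain ⟨hm, hd5⟩ := hsmall
    interval_cases m <;> interval_cases d <;> norm_num [Nat.choose] at hkN h ⊢ <;> omega
  · refine le_sub_sub_mul_succ (by positivity) hkN (by linarith) h ?_
    linarith [add_three_mul_choose_sub_choose_sub m d,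
      cube_sub_sq_add_one_le_mul_choose m d hd (by omega)]

/-- Lemma 6.3(ii) of Brambilla–Ottaviani: the numerical lemma used in the
Alexander–Hirschowitz induction. -/
theorem stmt_1 (n d : ℕ) (k u ε : ℤ) (hn : 2 ≤ n) (hd : 4 ≤ d)
    (hk0 : 0 ≤ k) (hk : k ≤ ⌈(((n + d).choose n : ℚ)) / ((n : ℚ) + 1)⌉)
    (hε0 : 0 ≤ ε) (hεn : ε < (n : ℤ))
    (h : (n : ℤ) * u + ε = k * ((n : ℤ) + 1) - ((n + d - 1).choose n : ℤ)) :
    ((n + d - 2).choose n : ℤ) ≤ (k - u - ε) * ((n : ℤ) + 1) :=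
  stmt_1_general n d k u ε hn hd hk hεn h
end

section
/- Let X ⊆ P^n be a zero-dimensional scheme contained in a finite union of double points, and let D be a linear system (the sections of a twisted ideal sheaf I_Z(d)). Then X imposes deg X independent conditions on D if and only if every curvilinear subscheme of X imposes independent conditions on D. -/
set_option maxHeartbeats 1000000
set_option synthInstance.maxHeartbeats 400000

open MvPolynomial

noncomputable section

/-- The maximal ideal of polynomials vanishing at a point `q` of affine `n`-space. -/
def maxIdealAt {K : Type*} [Field K] {n : ℕ} (q : Fin n → K) :
    Ideal (MvPolynomial (Fin n) K) :=
  RingHom.ker (eval q)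

/-- The degree (length) of the zero-dimensional scheme defined by the ideal `J`. -/
def schemeDeg {K : Type*} [Field K] {n : ℕ} (J : Ideal (MvPolynomial (Fin n) K)) : ℕ :=
  Module.finrank K (MvPolynomial (Fin n) K ⧸ J)

/-- The Hilbert function `h(X, D) = dim D − dim (D ∩ I_X)` of the scheme defined by `J`
with respect to the linear system `D`. -/
def hilbFn {K : Type*} [Field K] {n : ℕ} (D : Submodule K (MvPolynomial (Fin n) K))
    (J : Ideal (MvPolynomial (Fin n) K)) : ℕ :=
  Module.finrank K D - Module.finrank K ↥(D ⊓ Submodule.restrictScalars K J)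

namespace ChandlerAux

variable {K : Type*} [Field K] {n : ℕ}

theorem lemmaA (D : Submodule K (MvPolynomial (Fin n) K)) (hD : FiniteDimensional K ↥D)
    (J : Ideal (MvPolynomial (Fin n) K))
    (hfin : FiniteDimensional K (MvPolynomial (Fin n) K ⧸ J)) :
    hilbFn D J = Module.finrank K (MvPolynomial (Fin n) K ⧸ J) ↔
      D ⊔ Submodule.restrictScalars K J = ⊤ := by
  classical
  set R := MvPolynomial (Fin n) K
  set Jr := Submodule.restrictScalars K J with hJr
  have e : (R ⧸ Jr) ≃ₗ[K] (R ⧸ J) := Submodule.Quotient.restrictScalarsEquiv K J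
  have hfin' : FiniteDimensional K (R ⧸ Jr) := Module.Finite.equiv e.symm
  set π : ↥D →ₗ[K] R ⧸ Jr := Jr.mkQ.comp D.subtype with hπ
  have hker : LinearMap.ker π = Submodule.comap D.subtype Jr := by
    rw [hπ, LinearMap.ker_comp, Submodule.ker_mkQ]
  have hrange : LinearMap.range π = Submodule.map Jr.mkQ D := by
    rw [hπ, LinearMap.range_comp, Submodule.range_subtype]
  have hrn := LinearMap.finrank_range_add_finrank_ker π
  have hkerrank : Module.finrank K ↥(LinearMap.ker π) = Module.finrank K ↥(D ⊓ Jr) := by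
    rw [hker]
    have := (Submodule.comap D.subtype Jr).equivMapOfInjective D.subtype
      (Submodule.injective_subtype D)
    rw [Submodule.map_comap_subtype] at this
    exact this.finrank_eq
  have hhilb : hilbFn D J = Module.finrank K ↥(LinearMap.range π) := by
    unfold hilbFn
    rw [← hJr, ← hkerrank]
    omega
  rw [hhilb]
  have htoprk : Module.finrank K (R ⧸ J) = Module.finrank K (R ⧸ Jr) := e.symm.finrank_eq
  rw [htoprk, hrange]
  constructor
  · intro h
    have hmap : Submodule.map Jr.mkQ D = ⊤ := by
      by_contra hne
      exact (Nat.ne_of_lt (Submodule.finrank_lt hne)) h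
    -- now conclude
    have := congrArg (Submodule.comap Jr.mkQ) hmap
    rwa [Submodule.comap_map_eq, Submodule.ker_mkQ, Submodule.comap_top] at this
  · intro h
    have : Submodule.map Jr.mkQ (D ⊔ Jr) = ⊤ := by
      rw [h, Submodule.map_top, Submodule.range_mkQ]
    have hb : Submodule.map Jr.mkQ Jr = ⊥ := by
      rw [eq_bot_iff]; rintro x ⟨y, hy, rfl⟩
      simpa [Submodule.Quotient.mk_eq_zero] using hy
    rw [Submodule.map_sup, hb, sup_bot_eq] at this
    rw [this, finrank_top]

theorem exists_functional {V : Type*} [AddCommGroup V] [Module K V] (W : Submodule K V) (h : W ≠ ⊤) :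
    ∃ ψ : V →ₗ[K] K, ψ ≠ 0 ∧ W ≤ LinearMap.ker ψ := by
  obtain ⟨x, hx⟩ : ∃ x, x ∉ W := by
    by_contra hc; push_neg at hc; exact h (eq_top_iff.mpr fun y _ => hc y)
  have hx0 : W.mkQ x ≠ 0 := by
    simpa [Submodule.mkQ_apply, Submodule.Quotient.mk_eq_zero] using hx
  have := (Module.forall_dual_apply_eq_zero_iff K (W.mkQ x)).not.mpr hx0
  push_neg at this
  obtain ⟨φ, hφ⟩ := this
  refine ⟨φ.comp W.mkQ, ?_, ?_⟩
  · intro hc; exact hφ (by rw [← LinearMap.comp_apply, hc, LinearMap.zero_apply])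
  · intro y hy
    simp [LinearMap.mem_ker, Submodule.Quotient.mk_eq_zero, hy,
      (Submodule.Quotient.mk_eq_zero W).mpr hy]

def killIdeal (ψ : MvPolynomial (Fin n) K →ₗ[K] K) : Ideal (MvPolynomial (Fin n) K) where
  carrier := {f | ∀ g, ψ (g * f) = 0}
  add_mem' := by intro a b ha hb g; rw [mul_add, map_add, ha g, hb g, add_zero]
  zero_mem' := by intro g; rw [mul_zero, map_zero]
  smul_mem' := by
    intro c x hx g
    simp only [smul_eq_mul, Set.mem_setOf_eq] at *
    rw [← mul_assoc]; exact hx (g * c)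
-- spanning lemma for R/m^2
theorem span_top_aux (q : Fin n → K) :
    Submodule.span K ({1} ∪ Set.range fun t => (X t : MvPolynomial (Fin n) K) - C (q t)) ⊔
      Submodule.restrictScalars K ((maxIdealAt q) ^ 2) = ⊤ := by
  set m : Ideal (MvPolynomial (Fin n) K) := maxIdealAt q with hm
  set S := Submodule.span K ({1} ∪ Set.range fun t => (X t : MvPolynomial (Fin n) K) - C (q t))
    with hS
  set T := S ⊔ Submodule.restrictScalars K (m ^ 2) with hT
  suffices key : ∀ f, f ∈ T by
    rw [eq_top_iff]; exact fun f _ => key f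
  intro f
  have hgen : ∀ t, (X t : MvPolynomial (Fin n) K) - C (q t) ∈ m := by
    intro t; show eval q _ = 0; simp
  induction f using MvPolynomial.induction_on with
  | C a =>
      have : (C a : MvPolynomial (Fin n) K) = a • 1 := by
        rw [smul_eq_C_mul, mul_one]
      rw [this]
      exact Submodule.mem_sup_left (Submodule.smul_mem _ _
        (Submodule.subset_span (Or.inl rfl)))
  | add f g hf hg => exact Submodule.add_mem _ hf hg
  | mul_X f t hf =>
      obtain ⟨s, hs, m2, hm2, rfl⟩ := Submodule.mem_sup.mp hf
      have hm2X : m2 * X t ∈ Submodule.restrictScalars K (m ^ 2) :=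
        Ideal.mul_mem_right _ _ hm2
      have hsX : s * X t ∈ T := by
        clear hf
        induction hs using Submodule.span_induction with
        | mem x hx =>
            rcases hx with hx | ⟨u, rfl⟩
            · rw [Set.mem_singleton_iff] at hx
              subst hx
              rw [one_mul]
              have : (X t : MvPolynomial (Fin n) K) =
                  (X t - C (q t)) + (q t) • 1 := by
                rw [smul_eq_C_mul, mul_one]; ring
              rw [this]
              exact Submodule.add_mem _
                (Submodule.mem_sup_left (Submodule.subset_span (Or.inr ⟨t, rfl⟩)))
                (Submodule.mem_sup_left (Submodule.smul_mem _ _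
                  (Submodule.subset_span (Or.inl rfl))))
            · have : (X u - C (q u)) * X t =
                  (X u - C (q u)) * (X t - C (q t)) + (q t) • (X u - C (q u)) := by
                rw [smul_eq_C_mul]; ring
              rw [this]
              refine Submodule.add_mem _ (Submodule.mem_sup_right ?_)
                (Submodule.mem_sup_left (Submodule.smul_mem _ _
                  (Submodule.subset_span (Or.inr ⟨u, rfl⟩))))
              show _ ∈ m ^ 2
              rw [pow_two]
              exact Ideal.mul_mem_mul (hgen u) (hgen t)
        | zero => rw [zero_mul]; exact Submodule.zero_mem _
        | add x y _ _ hx hy => rw [add_mul]; exact Submodule.add_mem _ hx hy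
        | smul c x _ hx => rw [smul_mul_assoc]; exact Submodule.smul_mem _ _ hx
      rw [add_mul]
      exact Submodule.add_mem _ hsX (Submodule.mem_sup_right hm2X)

-- finite dimensionality of R/m^2
instance findim_m2 (q : Fin n → K) :
    FiniteDimensional K (MvPolynomial (Fin n) K ⧸ (maxIdealAt q) ^ 2) := by
  set m2 := (maxIdealAt q) ^ 2
  have e : (MvPolynomial (Fin n) K ⧸ Submodule.restrictScalars K m2) ≃ₗ[K]
      (MvPolynomial (Fin n) K ⧸ m2) := Submodule.Quotient.restrictScalarsEquiv K m2
  suffices h : FiniteDimensional K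
      (MvPolynomial (Fin n) K ⧸ Submodule.restrictScalars K m2) from
    Module.Finite.equiv e
  set A := Submodule.restrictScalars K m2
  set s : Set (MvPolynomial (Fin n) K) :=
    {1} ∪ Set.range fun t => (X t : MvPolynomial (Fin n) K) - C (q t) with hs
  have hfin : s.Finite := (Set.finite_singleton 1).union (Set.finite_range _)
  have htop : Submodule.span K (A.mkQ '' s) = ⊤ := by
    rw [← Submodule.map_span]
    have h1 : Submodule.map A.mkQ A = ⊥ := by
      rw [eq_bot_iff]; rintro x ⟨y, hy, rfl⟩
      simpa [Submodule.Quotient.mk_eq_zero] using hy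
    have := congrArg (Submodule.map A.mkQ) (span_top_aux q)
    rwa [Submodule.map_sup, h1, sup_bot_eq, Submodule.map_top, Submodule.range_mkQ] at this
  exact Module.finite_def.mpr ((Submodule.fg_def).mpr ⟨_, hfin.image _, htop⟩)

-- finiteness of quotient by any ideal above the intersection of the double points
theorem findim_above {k : ℕ} (p : Fin k → (Fin n → K)) (J' : Ideal (MvPolynomial (Fin n) K))
    (hQ : (⨅ i, (maxIdealAt (p i)) ^ 2) ≤ J') :
    FiniteDimensional K (MvPolynomial (Fin n) K ⧸ J') := by
  classical
  set R' := MvPolynomial (Fin n) K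
  set Q : Ideal R' := ⨅ i, (maxIdealAt (p i)) ^ 2 with hQdef
  -- first: R'/Q is finite dimensional, via embedding into the product
  have hfinQ : FiniteDimensional K (R' ⧸ Submodule.restrictScalars K Q) := by
    set g : R' →ₗ[K] (∀ i : Fin k, R' ⧸ (maxIdealAt (p i)) ^ 2) :=
      LinearMap.pi (fun i => (Ideal.Quotient.mkₐ K ((maxIdealAt (p i)) ^ 2)).toLinearMap)
      with hg
    have hker : LinearMap.ker g = Submodule.restrictScalars K Q := by
      ext f
      simp only [LinearMap.mem_ker, hg, LinearMap.pi_apply, funext_iff, Pi.zero_apply,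
        Submodule.restrictScalars_mem, hQdef, Submodule.mem_iInf]
      refine forall_congr' fun i => ?_
      show Ideal.Quotient.mk _ f = 0 ↔ _
      rw [Ideal.Quotient.eq_zero_iff_mem]
    set Φ := Submodule.liftQ (Submodule.restrictScalars K Q) g (le_of_eq hker.symm)
    have hinj : Function.Injective Φ := by
      rw [← LinearMap.ker_eq_bot]
      exact Submodule.ker_liftQ_eq_bot _ _ _ (le_of_eq hker)
    exact FiniteDimensional.of_injective Φ hinj
  -- then: surject onto R'/J'
  have hsurj : Function.Surjective
      (Submodule.mapQ (Submodule.restrictScalars K Q) (Submodule.restrictScalars K J')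
        LinearMap.id (fun x hx => hQ hx)) := by
    intro y
    obtain ⟨f, rfl⟩ := Submodule.Quotient.mk_surjective _ y
    exact ⟨Submodule.Quotient.mk f, rfl⟩
  have : FiniteDimensional K (R' ⧸ Submodule.restrictScalars K J') :=
    Module.Finite.of_surjective _ hsurj
  exact Module.Finite.equiv (Submodule.Quotient.restrictScalarsEquiv K J')

theorem maxIdealAt_ne {q q' : Fin n → K} (h : q ≠ q') : maxIdealAt q ≠ maxIdealAt q' := by
  intro heq
  apply h
  funext t
  have hmem : (X t : MvPolynomial (Fin n) K) - C (q' t) ∈ maxIdealAt q' := by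
    show eval q' _ = 0; simp
  rw [← heq] at hmem
  have : eval q ((X t : MvPolynomial (Fin n) K) - C (q' t)) = 0 := hmem
  simpa [sub_eq_zero] using this
theorem myiInf_split {ι : Type*} [CompleteLattice ι] {k : ℕ} (f : Fin k → ι) (i : Fin k) :
    (⨅ j, f j) = f i ⊓ ⨅ j, ⨅ (_ : j ≠ i), f j := by
  apply le_antisymm
  · exact le_inf (iInf_le f i) (le_iInf fun j => le_iInf fun _ => iInf_le f j)
  · apply le_iInf
    intro j
    by_cases hj : j = i
    · subst hj; exact inf_le_left
    · exact le_trans inf_le_right (le_trans (iInf_le _ j) (iInf_le _ hj))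
theorem perpoint {k : ℕ} (p : Fin k → Fin n → K) (hp : Function.Injective p)
    (ψ : MvPolynomial (Fin n) K →ₗ[K] K)
    (hQψ : Submodule.restrictScalars K (⨅ j, (maxIdealAt (p j)) ^ 2) ≤ LinearMap.ker ψ)
    (i : Fin k) :
    Module.finrank K (MvPolynomial (Fin n) K ⧸ (killIdeal ψ ⊔ (maxIdealAt (p i)) ^ 2)) ≤ 2 := by
  classical
  set R' := MvPolynomial (Fin n) K
  set m : Ideal R' := maxIdealAt (p i) with hm
  set Qi : Ideal R' := ⨅ j, ⨅ (_ : j ≠ i), (maxIdealAt (p j)) ^ 2 with hQi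
  have hsplit : (⨅ j, (maxIdealAt (p j)) ^ 2) = m ^ 2 ⊓ Qi := myiInf_split _ i
  -- coprimality and the quasi-idempotent e
  have hcop : IsCoprime (m ^ 2) Qi := by
    have hQi' : Qi = ⨅ j ∈ Finset.univ.erase i, (maxIdealAt (p j)) ^ 2 := by
      apply iInf_congr
      intro j
      exact iInf_congr_Prop (by simp [Finset.mem_erase]) (fun _ => rfl)
    rw [hQi']
    apply Ideal.isCoprime_biInf
    intro j hj
    have hji : j ≠ i := (Finset.mem_erase.mp hj).1
    have hmax1 : (maxIdealAt (p i)).IsMaximal :=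
      RingHom.ker_isMaximal_of_surjective _ (fun a => ⟨C a, by simp⟩)
    have hmax2 : (maxIdealAt (p j)).IsMaximal :=
      RingHom.ker_isMaximal_of_surjective _ (fun a => ⟨C a, by simp⟩)
    exact (Ideal.isCoprime_iff_sup_eq.mpr (hmax1.coprime_of_ne hmax2
      (maxIdealAt_ne (fun hh => hji (hp hh.symm))))).pow
  obtain ⟨a, ha, e, he, hae⟩ := Submodule.mem_sup.mp
    (by rw [hcop.sup_eq]; exact Submodule.mem_top :
      (1 : R') ∈ m ^ 2 ⊔ Qi)
  -- the key claim
  have key : ∀ h ∈ m, ψ (e * h) = 0 → h ∈ killIdeal ψ ⊔ m ^ 2 := by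
    intro h hhm hψ
    have hsum : h = e * h + a * h := by
      rw [← add_mul, add_comm e a, hae, one_mul]
    refine Submodule.mem_sup.mpr ⟨e * h, ?_, a * h, Ideal.mul_mem_right h _ ha, hsum.symm⟩
    -- e * h ∈ killIdeal ψ
    intro g
    set c := eval (p i) g with hc
    have hdec : g * (e * h) = C c * (e * h) + (g - C c) * (e * h) := by ring
    have h1 : ψ (C c * (e * h)) = 0 := by
      rw [C_mul', map_smul, hψ, smul_zero]
    have h2 : ψ ((g - C c) * (e * h)) = 0 := by
      have hg' : g - C c ∈ m := by
        show eval (p i) _ = 0; simp [hc]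
      have hmem : (g - C c) * (e * h) ∈ (⨅ j, (maxIdealAt (p j)) ^ 2) := by
        rw [hsplit]
        constructor
        · have : (g - C c) * (e * h) = ((g - C c) * h) * e := by ring
          rw [this]
          apply Ideal.mul_mem_right
          rw [pow_two]
          exact Ideal.mul_mem_mul hg' hhm
        · have : (g - C c) * (e * h) = ((g - C c) * h) * e := by ring
          rw [this]
          exact Ideal.mul_mem_left _ _ he
      exact hQψ hmem
    rw [hdec, map_add, h1, h2, add_zero]
  -- now the dimension bound
  set Tm : Ideal R' := killIdeal ψ ⊔ m ^ 2 with hTm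
  set A := Submodule.restrictScalars K Tm with hA
  have hmA : ∀ h ∈ m, ψ (e * h) = 0 → h ∈ A := fun h h1 h2 => key h h1 h2
  have hspan : ∃ x₀ : R', ∀ f : R', f ∈ Submodule.span K {1, x₀} ⊔ A := by
    by_cases hcase : ∀ h ∈ m, ψ (e * h) = 0
    · refine ⟨0, fun f => ?_⟩
      have : f = (eval (p i) f) • (1 : R') + (f - C (eval (p i) f)) := by
        rw [smul_eq_C_mul, mul_one]; ring
      rw [this]
      refine Submodule.add_mem _
        (Submodule.mem_sup_left (Submodule.smul_mem _ _
          (Submodule.subset_span (Or.inl rfl)))) (Submodule.mem_sup_right ?_)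
      refine hmA _ ?_ (hcase _ ?_) <;>
        · show eval (p i) _ = 0; simp
    · push_neg at hcase
      obtain ⟨x₀, hx₀m, hx₀⟩ := hcase
      refine ⟨x₀, fun f => ?_⟩
      set cf := eval (p i) f with hcf
      set h := f - C cf with hh
      have hhm : h ∈ m := by show eval (p i) _ = 0; simp [hh, hcf]
      set d := ψ (e * h) / ψ (e * x₀) with hd
      have hrem : h - d • x₀ ∈ A := by
        refine hmA _ (Submodule.sub_mem _ hhm (m.smul_of_tower_mem d hx₀m)) ?_
        have : e * (h - d • x₀) = e * h - d • (e * x₀) := by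
          rw [mul_sub, mul_smul_comm]
        rw [this, map_sub, map_smul, smul_eq_mul, hd, div_mul_cancel₀ _ hx₀, sub_self]
      have : f = cf • (1 : R') + d • x₀ + (h - d • x₀) := by
        rw [smul_eq_C_mul, mul_one, hh]; ring
      rw [this]
      refine Submodule.add_mem _ (Submodule.add_mem _ ?_ ?_) (Submodule.mem_sup_right hrem)
      · exact Submodule.mem_sup_left (Submodule.smul_mem _ _
          (Submodule.subset_span (Or.inl rfl)))
      · exact Submodule.mem_sup_left (Submodule.smul_mem _ _
          (Submodule.subset_span (Or.inr rfl)))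
  obtain ⟨x₀, hx₀⟩ := hspan
  -- conclude
  have efin : (R' ⧸ A) ≃ₗ[K] (R' ⧸ Tm) := Submodule.Quotient.restrictScalarsEquiv K Tm
  rw [← efin.finrank_eq]
  have htop : Submodule.span K (A.mkQ '' {1, x₀}) = ⊤ := by
    rw [← Submodule.map_span, eq_top_iff]
    rintro y -
    obtain ⟨f, rfl⟩ := Submodule.Quotient.mk_surjective _ y
    obtain ⟨s, hs, b, hb, rfl⟩ := Submodule.mem_sup.mp (hx₀ f)
    have hz : A.mkQ (s + b) = A.mkQ s := by
      rw [map_add, show A.mkQ b = 0 from (Submodule.Quotient.mk_eq_zero A).mpr hb, add_zero]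
    rw [show (Submodule.Quotient.mk (s + b) : R' ⧸ A) = A.mkQ (s + b) from rfl, hz]
    exact Submodule.mem_map_of_mem hs
  set sfin : Finset (R' ⧸ A) := {A.mkQ 1, A.mkQ x₀} with hsfin
  have himg : (A.mkQ '' {1, x₀}) = (sfin : Set (R' ⧸ A)) := by
    rw [Set.image_pair]; simp [hsfin]
  calc Module.finrank K (R' ⧸ A) = Module.finrank K (⊤ : Submodule K (R' ⧸ A)) :=
        (finrank_top _ _).symm
    _ = Module.finrank K (Submodule.span K (sfin : Set (R' ⧸ A))) := by
        rw [← htop, himg]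
    _ ≤ sfin.card := by
        simpa [Set.finrank] using finrank_span_finset_le_card (R := K) sfin
    _ ≤ 2 := le_trans (Finset.card_insert_le _ _) (by simp)

end ChandlerAux

open ChandlerAux in
/-- Chandler's Curvilinear Lemma. -/
theorem stmt_16 (K : Type*) [Field K] (n k : ℕ) (p : Fin k → (Fin n → K))
    (hp : Function.Injective p)
    (J : Ideal (MvPolynomial (Fin n) K))
    (hJ : (⨅ i, (maxIdealAt (p i)) ^ 2) ≤ J)
    (D : Submodule K (MvPolynomial (Fin n) K)) (hD : FiniteDimensional K ↥D) :
    hilbFn D J = schemeDeg J ↔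
      ∀ J' : Ideal (MvPolynomial (Fin n) K), J ≤ J' →
        (∀ i, Module.finrank K
          (MvPolynomial (Fin n) K ⧸ (J' ⊔ (maxIdealAt (p i)) ^ 2)) ≤ 2) →
        hilbFn D J' = schemeDeg J' := by
  classical
  have hfinJ : FiniteDimensional K (MvPolynomial (Fin n) K ⧸ J) := findim_above p J hJ
  constructor
  · intro h J' hJJ' _
    have hfin' : FiniteDimensional K (MvPolynomial (Fin n) K ⧸ J') :=
      findim_above p J' (le_trans hJ hJJ')
    have htop : D ⊔ Submodule.restrictScalars K J = ⊤ := (lemmaA D hD J hfinJ).mp h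
    refine (lemmaA D hD J' hfin').mpr ?_
    rw [eq_top_iff, ← htop]
    exact sup_le_sup_left (fun x hx => hJJ' hx) D
  · intro h
    by_contra hne
    have hWne : D ⊔ Submodule.restrictScalars K J ≠ ⊤ :=
      fun htop => hne ((lemmaA D hD J hfinJ).mpr htop)
    obtain ⟨ψ, hψ0, hψW⟩ := exists_functional _ hWne
    have hJψ : Submodule.restrictScalars K J ≤ LinearMap.ker ψ :=
      le_trans le_sup_right hψW
    have hQψ : Submodule.restrictScalars K (⨅ i, (maxIdealAt (p i)) ^ 2) ≤
        LinearMap.ker ψ := le_trans (fun x hx => hJ hx) hJψ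
    set T := killIdeal ψ with hT
    have hJT : J ≤ T := fun f hf g => hJψ (J.mul_mem_left g hf)
    have hTdeg : ∀ i, Module.finrank K
        (MvPolynomial (Fin n) K ⧸ (T ⊔ (maxIdealAt (p i)) ^ 2)) ≤ 2 :=
      perpoint p hp ψ hQψ
    have hfinT : FiniteDimensional K (MvPolynomial (Fin n) K ⧸ T) :=
      findim_above p T (le_trans hJ hJT)
    have htopT := (lemmaA D hD T hfinT).mp (h T hJT hTdeg)
    have hle : D ⊔ Submodule.restrictScalars K T ≤ LinearMap.ker ψ := by
      refine sup_le (le_trans le_sup_left hψW) ?_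
      intro f hf
      simpa using hf 1
    rw [htopT] at hle
    exact hψ0 (LinearMap.ker_eq_top.mp (top_le_iff.mp hle))

end
end
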